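/- arXiv:2602.02492 — 2 statements merged into one kernel-verified Lean document; each statement's English description precedes it below -/
import Mathlib

section
/- Proposition A.3 (modified Poincaré polynomial identity with type ²D_n weights): For every integer n ≥ 1, the identity ∑_{w ∈ W_n} q^{inv(w)+2·neg(w)+nsp(w)} ∏_{i ∈ Neg(w)} x_i = [n]_q! · ∏_{i=1}^{n} (1 + q^{i+1} x_i) holds in the polynomial ring ℤ[q, x_1, …, x_n], where the sum runs over all signed permutations w of rank n. -/
/-!
Proposition A.3 (modified Poincaré polynomial identity with type ²Dₙ weights).

A signed permutation of rank `n` is encoded, via the canonical bijection `w = w_I w_τ`,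
as a pair of a sign vector (`true` = sign `−1`, indexed by the value) and a permutation.
-/

/-- A signed permutation of rank `n`. -/
abbrev SignedPerm (n : ℕ) := (Fin n → Bool) × Equiv.Perm (Fin n)

/-- The 1-based window value `w(j) ∈ {−n,…,−1,1,…,n}` of a signed permutation at `j`. -/
def spVal {n : ℕ} (w : SignedPerm n) (j : Fin n) : ℤ :=
  if w.1 (w.2 j) then -(((w.2 j : ℕ) : ℤ) + 1) else ((w.2 j : ℕ) : ℤ) + 1

/-- `inv(w) = #{(i,j) : i < j, w(i) > w(j)}`. -/
def spInv {n : ℕ} (w : SignedPerm n) : ℕ :=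
  (Finset.univ.filter fun p : Fin n × Fin n => p.1 < p.2 ∧ spVal w p.2 < spVal w p.1).card

/-- `neg(w) = #{i : w(i) < 0}`. -/
def spNeg {n : ℕ} (w : SignedPerm n) : ℕ :=
  (Finset.univ.filter fun j : Fin n => spVal w j < 0).card

/-- `nsp(w) = #{(i,j) : i < j, w(i) + w(j) < 0}`. -/
def spNsp {n : ℕ} (w : SignedPerm n) : ℕ :=
  (Finset.univ.filter fun p : Fin n × Fin n => p.1 < p.2 ∧ spVal w p.1 + spVal w p.2 < 0).card

/-- The type-B Coxeter length `ℓ_B(w) = inv(w) + neg(w) + nsp(w)`. -/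
def spLenB {n : ℕ} (w : SignedPerm n) : ℕ := spInv w + spNeg w + spNsp w

/-- `Neg(w) = {−w(j) : w(j) < 0} ⊆ {1,…,n}`, as a finset of `Fin n`
(the index `i` encodes the value `i+1`). -/
def spNegSet {n : ℕ} (w : SignedPerm n) : Finset (Fin n) :=
  Finset.univ.filter fun i : Fin n => ∃ j, spVal w j = -(((i : ℕ) : ℤ) + 1)

/-- The variable `q` in `ℤ[q, x_1, …, x_n]`. -/
noncomputable def qvar (n : ℕ) : MvPolynomial (Fin n) (Polynomial ℤ) :=
  MvPolynomial.C Polynomial.X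

/-- The `q`-factorial `[n]_q! = ∏_{k=1}^{n} (1 + q + ⋯ + q^{k−1})`. -/
noncomputable def qFactorial (n : ℕ) : MvPolynomial (Fin n) (Polynomial ℤ) :=
  ∏ k ∈ Finset.range n, ∑ j ∈ Finset.range (k + 1), qvar n ^ j


section Aux
open Finset
variable {n : ℕ}


/-- signed value of a value `u` with sign vector `ε`. -/
def sval (ε : Fin n → Bool) (u : Fin n) : ℤ :=
  if ε u then -(((u : ℕ) : ℤ) + 1) else ((u : ℕ) : ℤ) + 1

/-- number of smaller values occurring before `v`. -/
def Cc (τ : Equiv.Perm (Fin n)) (v : Fin n) : ℕ :=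
  (Finset.univ.filter fun u => u < v ∧ τ.symm u < τ.symm v).card

/-- number of larger values occurring before `v`. -/
def Aa (τ : Equiv.Perm (Fin n)) (v : Fin n) : ℕ :=
  (Finset.univ.filter fun u => v < u ∧ τ.symm u < τ.symm v).card

lemma card_pos_lt (τ : Equiv.Perm (Fin n)) (v : Fin n) :
    (Finset.univ.filter fun u => τ.symm u < τ.symm v).card = (τ.symm v : ℕ) := by
  rw [← Fin.card_Iio (τ.symm v)]
  apply Finset.card_bij (fun u _ => τ.symm u)
  · intro a ha; simp at ha ⊢; exact ha
  · intro a _ b _ h; exact τ.symm.injective h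
  · intro b hb; exact ⟨τ b, by simpa using hb, by simp⟩

lemma Aa_add_Cc (τ : Equiv.Perm (Fin n)) (v : Fin n) :
    Aa τ v + Cc τ v = (τ.symm v : ℕ) := by
  rw [← card_pos_lt τ v, Aa, Cc, ← Finset.card_union_of_disjoint]
  · congr 1
    ext u
    simp only [mem_union, mem_filter, mem_univ, true_and]
    constructor
    · rintro (⟨_, h⟩ | ⟨_, h⟩) <;> exact h
    · intro h
      rcases lt_trichotomy u v with h1 | h1 | h1
      · exact Or.inr ⟨h1, h⟩
      · subst h1; exact absurd h (lt_irrefl _)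
      · exact Or.inl ⟨h1, h⟩
  · rw [Finset.disjoint_left]
    rintro u hu hu'
    simp at hu hu'
    exact absurd (hu.1.trans hu'.1) (lt_irrefl _)

lemma Cc_le (τ : Equiv.Perm (Fin n)) (v : Fin n) : Cc τ v ≤ (v : ℕ) := by
  calc Cc τ v ≤ (Finset.univ.filter fun u : Fin n => u < v).card := by
        apply Finset.card_le_card
        intro u hu; simp only [mem_filter, mem_univ, true_and] at hu ⊢; exact hu.1
    _ = (v : ℕ) := by
        rw [show (Finset.univ.filter fun u : Fin n => u < v) = Finset.Iio v by ext u; simp,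
          Fin.card_Iio]

lemma Cc_pos_form (τ : Equiv.Perm (Fin n)) (v : Fin n) :
    Cc τ v = (Finset.univ.filter fun p => p < τ.symm v ∧ τ p < v).card := by
  apply Finset.card_bij (fun u _ => τ.symm u)
  · intro u hu; simp only [mem_filter, mem_univ, true_and] at hu ⊢
    exact ⟨hu.2, by simpa using hu.1⟩
  · intro a _ b _ h; exact τ.symm.injective h
  · intro p hp
    simp only [mem_filter, mem_univ, true_and] at hp
    exact ⟨τ p, by simp [hp.1, hp.2], by simp⟩

lemma Cc_not_lt (τ σ : Equiv.Perm (Fin n)) (v : Fin n)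
    (hC : Cc τ v = Cc σ v) (IH : ∀ u, v < u → τ.symm u = σ.symm u) :
    ¬ τ.symm v < σ.symm v := by
  intro hab
  set a := τ.symm v with ha
  set b := σ.symm v with hb
  have hT : ∀ p : Fin n, v < τ p ↔ v < σ p := by
    intro p
    constructor
    · intro h
      have := IH (τ p) h
      simp only [Equiv.symm_apply_apply] at this
      have : σ p = τ p := by
        conv_lhs => rw [this]
        simp
      rw [this]; exact h
    · intro h
      have := (IH (σ p) h).symm
      simp only [Equiv.symm_apply_apply] at this
      have : τ p = σ p := by
        conv_lhs => rw [this]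
        simp
      rw [this]; exact h
  have e1 : Cc τ v = (Finset.univ.filter fun p => p < a ∧ ¬ v < τ p).card := by
    rw [Cc_pos_form]
    congr 1
    apply Finset.filter_congr
    intro p _
    simp only [and_congr_right_iff, ha]
    intro hpa
    have hpv : τ p ≠ v := by
      intro h
      exact absurd (τ.symm.injective (by simpa using congrArg τ.symm h) : p = a) (ne_of_lt hpa)
    constructor
    · exact fun h => not_lt.mpr (le_of_lt h)
    · intro h; rcases lt_trichotomy (τ p) v with h1 | h1 | h1
      · exact h1
      · exact absurd h1 hpv
      · exact absurd h1 h
  have e2 : Cc σ v = (Finset.univ.filter fun p => p < b ∧ ¬ v < τ p).card := by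
    rw [Cc_pos_form]
    congr 1
    apply Finset.filter_congr
    intro p _
    simp only [and_congr_right_iff, hb]
    intro hpb
    have hpv : σ p ≠ v := by
      intro h
      exact absurd (σ.symm.injective (by simpa using congrArg σ.symm h) : p = b) (ne_of_lt hpb)
    rw [show (¬ v < τ p) ↔ (¬ v < σ p) from not_congr (hT p)]
    constructor
    · intro h; exact not_lt.mpr (le_of_lt h)
    · intro h; rcases lt_trichotomy (σ p) v with h1 | h1 | h1
      · exact h1
      · exact absurd h1 hpv
      · exact absurd h1 h
  have hlt : (Finset.univ.filter fun p => p < a ∧ ¬ v < τ p).card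
      < (Finset.univ.filter fun p => p < b ∧ ¬ v < τ p).card := by
    apply Finset.card_lt_card
    constructor
    · intro p hp
      simp only [mem_filter, mem_univ, true_and] at hp ⊢
      exact ⟨hp.1.trans hab, hp.2⟩
    · intro hsub
      have : a ∈ (Finset.univ.filter fun p => p < b ∧ ¬ v < τ p) := by
        simp only [mem_filter, mem_univ, true_and]
        exact ⟨hab, by simp [ha]⟩
      have := hsub this
      simp only [mem_filter, mem_univ, true_and] at this
      exact absurd this.1 (lt_irrefl _)
  omega

lemma Cc_injective (τ σ : Equiv.Perm (Fin n)) (h : ∀ v, Cc τ v = Cc σ v) : τ = σ := by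
  have key : ∀ k : ℕ, ∀ v : Fin n, n - (v : ℕ) ≤ k → τ.symm v = σ.symm v := by
    intro k
    induction k with
    | zero => intro v hv; exact absurd hv (by have := v.isLt; omega)
    | succ k IH =>
      intro v _
      have IH' : ∀ u, v < u → τ.symm u = σ.symm u := by
        intro u hu
        apply IH
        have h1 : (v : ℕ) < (u : ℕ) := hu
        have h2 : (u : ℕ) < n := u.isLt
        omega
      exact le_antisymm (not_lt.mp (Cc_not_lt σ τ v (h v).symm (fun u hu => (IH' u hu).symm)))
        (not_lt.mp (Cc_not_lt τ σ v (h v) IH'))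
  ext p
  have := key n (τ p) (by omega)
  simp only [Equiv.symm_apply_apply] at this
  conv_lhs => rw [show τ p = σ (σ.symm (τ p)) by simp, ← this]

lemma spVal_eq (w : SignedPerm n) (j : Fin n) : spVal w j = sval w.1 (w.2 j) := rfl

lemma spNegSet_eq (w : SignedPerm n) :
    spNegSet w = Finset.univ.filter fun v => w.1 v = true := by
  ext i
  simp only [spNegSet, mem_filter, mem_univ, true_and]
  constructor
  · rintro ⟨j, hj⟩
    rw [spVal_eq, sval] at hj
    by_cases h : w.1 (w.2 j)
    · rw [if_pos h] at hj
      have : ((w.2 j : ℕ) : ℤ) = ((i : ℕ) : ℤ) := by omega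
      have : w.2 j = i := Fin.ext (by exact_mod_cast this)
      rwa [← this]
    · rw [if_neg h] at hj
      have := (w.2 j).isLt
      omega
  · intro h
    refine ⟨w.2.symm i, ?_⟩
    rw [spVal_eq, Equiv.apply_symm_apply, sval, if_pos h]

lemma spNeg_eq (w : SignedPerm n) :
    spNeg w = ∑ v : Fin n, (if w.1 v then 1 else 0) := by
  rw [spNeg]
  rw [show (Finset.univ.filter fun j => spVal w j < 0)
      = Finset.univ.filter fun j => w.1 (w.2 j) = true by
    ext j
    simp only [mem_filter, mem_univ, true_and, spVal]
    by_cases h : w.1 (w.2 j) <;> simp [h] <;> omega]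
  rw [Finset.card_filter]
  exact Equiv.sum_comp w.2 (fun v => if w.1 v = true then (1:ℕ) else 0)

lemma inv_add_nsp (w : SignedPerm n) :
    spInv w + spNsp w
      = ∑ v : Fin n, (if w.1 v then Aa w.2 v + 2 * Cc w.2 v else Aa w.2 v) := by
  classical
  obtain ⟨ε, τ⟩ := w
  set F : Fin n × Fin n → ℕ := fun p =>
    (if p.1 < p.2 ∧ spVal (ε, τ) p.2 < spVal (ε, τ) p.1 then 1 else 0)
      + (if p.1 < p.2 ∧ spVal (ε, τ) p.1 + spVal (ε, τ) p.2 < 0 then 1 else 0) with hF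
  have h1 : spInv (ε, τ) + spNsp (ε, τ) = ∑ p : Fin n × Fin n, F p := by
    rw [spInv, spNsp, Finset.card_filter, Finset.card_filter, ← Finset.sum_add_distrib]
  set G : Fin n × Fin n → ℕ := fun q =>
    (if τ.symm q.1 < τ.symm q.2 ∧ sval ε q.2 < sval ε q.1 then 1 else 0)
      + (if τ.symm q.1 < τ.symm q.2 ∧ sval ε q.1 + sval ε q.2 < 0 then 1 else 0) with hG
  have h2 : ∑ p : Fin n × Fin n, F p = ∑ q : Fin n × Fin n, G q := by
    rw [← Equiv.sum_comp (Equiv.prodCongr τ.symm τ.symm) F]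
    apply Finset.sum_congr rfl
    intro q _
    simp only [hF, hG, Equiv.prodCongr_apply, Prod.map, spVal_eq, Equiv.apply_symm_apply]
  rw [h1, h2]
  have h3 : ∑ q : Fin n × Fin n, G q = ∑ v : Fin n, ∑ u : Fin n, G (u, v) := by
    rw [Fintype.sum_prod_type]
    exact Finset.sum_comm
  rw [h3]
  apply Finset.sum_congr rfl
  intro v _
  have key : ∀ u : Fin n, G (u, v)
      = (if ε v then
          ((if τ.symm u < τ.symm v then 1 else 0)
            + (if τ.symm u < τ.symm v ∧ u < v then 1 else 0))
        else (if τ.symm u < τ.symm v ∧ v < u then 1 else 0)) := by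
    intro u
    by_cases hπ : τ.symm u < τ.symm v
    · by_cases hv : ε v <;> by_cases hu : ε u <;>
        simp only [hG, sval, hπ, hv, hu, if_true, if_false, true_and, Fin.lt_def] <;>
        split_ifs <;> omega
    · by_cases hv : ε v <;> simp [hG, hπ]
  rw [Finset.sum_congr rfl (fun u _ => key u)]
  by_cases hv : ε v
  · simp only [if_pos hv]
    rw [Finset.sum_add_distrib, ← Finset.card_filter, ← Finset.card_filter]
    have e1 : (Finset.univ.filter fun u : Fin n => τ.symm u < τ.symm v).card
        = Aa τ v + Cc τ v := by rw [card_pos_lt, Aa_add_Cc]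
    have e2 : (Finset.univ.filter fun u : Fin n => τ.symm u < τ.symm v ∧ u < v).card
        = Cc τ v := by
      rw [Cc]; congr 1; ext u; simp [and_comm]
    omega
  · simp only [if_neg hv]
    rw [← Finset.card_filter]
    rw [Aa]; congr 1; ext u; simp [and_comm]

lemma stat_eq (w : SignedPerm n) :
    spInv w + 2 * spNeg w + spNsp w
      = ∑ v : Fin n, (if w.1 v then Aa w.2 v + 2 * Cc w.2 v + 2 else Aa w.2 v) := by
  have h1 := inv_add_nsp w
  have h2 := spNeg_eq w
  rw [show spInv w + 2 * spNeg w + spNsp w = (spInv w + spNsp w) + 2 * spNeg w from by ring,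
    h1, h2, Finset.mul_sum, ← Finset.sum_add_distrib]
  apply Finset.sum_congr rfl
  intro v _
  by_cases h : w.1 v <;> simp [h]

lemma Cc_sum (τ : Equiv.Perm (Fin n)) :
    ∑ v : Fin n, Aa τ v = ∑ v : Fin n, ((v : ℕ) - Cc τ v) := by
  have h1 : ∑ v : Fin n, (Aa τ v + Cc τ v) = ∑ v : Fin n, (v : ℕ) := by
    rw [Finset.sum_congr rfl (fun v _ => Aa_add_Cc τ v)]
    exact Equiv.sum_comp τ.symm (fun v : Fin n => (v : ℕ))
  have h2 : ∑ v : Fin n, (((v : ℕ) - Cc τ v) + Cc τ v) = ∑ v : Fin n, (v : ℕ) := by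
    apply Finset.sum_congr rfl
    intro v _
    have := Cc_le τ v
    omega
  rw [Finset.sum_add_distrib] at h1 h2
  omega

end Aux
/-- **Proposition A.3**: for every `n ≥ 1`,
`∑_{w ∈ W_n} q^{inv(w)+2·neg(w)+nsp(w)} ∏_{i ∈ Neg(w)} x_i = [n]_q! ∏_{i=1}^{n} (1 + q^{i+1} x_i)`
in `ℤ[q, x_1, …, x_n]`. -/
theorem modified_poincare_type2D (n : ℕ) (hn : 1 ≤ n) :
    ∑ w : SignedPerm n, qvar n ^ (spInv w + 2 * spNeg w + spNsp w) * ∏ i ∈ spNegSet w, MvPolynomial.X i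
      = qFactorial n * ∏ i : Fin n, (1 + qvar n ^ ((i : ℕ) + 2) * MvPolynomial.X i) := by
  classical
  have step1 : ∀ w : SignedPerm n,
      qvar n ^ (spInv w + 2 * spNeg w + spNsp w) * ∏ i ∈ spNegSet w, MvPolynomial.X i
        = ∏ v : Fin n, (if w.1 v then
            qvar n ^ (Aa w.2 v + 2 * Cc w.2 v + 2) * MvPolynomial.X v
          else qvar n ^ (Aa w.2 v)) := by
    intro w
    rw [stat_eq, spNegSet_eq, Finset.prod_filter, ← Finset.prod_pow_eq_pow_sum,
      ← Finset.prod_mul_distrib]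
    apply Finset.prod_congr rfl
    intro v _
    by_cases h : w.1 v <;> simp [h]
  rw [Finset.sum_congr rfl (fun w _ => step1 w), Fintype.sum_prod_type, Finset.sum_comm]
  have step2 : ∀ τ : Equiv.Perm (Fin n),
      (∑ ε : Fin n → Bool, ∏ v : Fin n, (if ε v then
          qvar n ^ (Aa τ v + 2 * Cc τ v + 2) * MvPolynomial.X v
        else qvar n ^ (Aa τ v)))
      = ∏ v : Fin n, (qvar n ^ (Aa τ v + 2 * Cc τ v + 2) * MvPolynomial.X v
          + qvar n ^ (Aa τ v)) := by
    intro τ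
    rw [show (∏ v : Fin n, (qvar n ^ (Aa τ v + 2 * Cc τ v + 2) * MvPolynomial.X v
          + qvar n ^ (Aa τ v)))
        = ∏ v : Fin n, ∑ b ∈ (Finset.univ : Finset Bool),
            (if b then qvar n ^ (Aa τ v + 2 * Cc τ v + 2) * MvPolynomial.X v
              else qvar n ^ (Aa τ v)) from by
      apply Finset.prod_congr rfl
      intro v _
      simp [Fintype.sum_bool]]
    rw [Finset.prod_univ_sum]
    rw [Fintype.piFinset_univ]
  rw [Finset.sum_congr rfl (fun τ _ => step2 τ)]
  have step3 : ∀ τ : Equiv.Perm (Fin n),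
      (∏ v : Fin n, (qvar n ^ (Aa τ v + 2 * Cc τ v + 2) * MvPolynomial.X v
          + qvar n ^ (Aa τ v)))
      = ∏ v : Fin n, (qvar n ^ ((v : ℕ) + Cc τ v + 2) * MvPolynomial.X v
          + qvar n ^ ((v : ℕ) - Cc τ v)) := by
    intro τ
    calc ∏ v : Fin n, (qvar n ^ (Aa τ v + 2 * Cc τ v + 2) * MvPolynomial.X v
            + qvar n ^ (Aa τ v))
        = ∏ v : Fin n, (qvar n ^ (Aa τ v)
            * (qvar n ^ (2 * Cc τ v + 2) * MvPolynomial.X v + 1)) := by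
          apply Finset.prod_congr rfl
          intro v _
          rw [show Aa τ v + 2 * Cc τ v + 2 = Aa τ v + (2 * Cc τ v + 2) from by omega, pow_add]
          ring
      _ = (∏ v : Fin n, qvar n ^ (Aa τ v))
            * ∏ v : Fin n, (qvar n ^ (2 * Cc τ v + 2) * MvPolynomial.X v + 1) :=
          Finset.prod_mul_distrib
      _ = (∏ v : Fin n, qvar n ^ ((v : ℕ) - Cc τ v))
            * ∏ v : Fin n, (qvar n ^ (2 * Cc τ v + 2) * MvPolynomial.X v + 1) := by
          rw [Finset.prod_pow_eq_pow_sum, Finset.prod_pow_eq_pow_sum, Cc_sum]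
      _ = ∏ v : Fin n, (qvar n ^ ((v : ℕ) - Cc τ v)
            * (qvar n ^ (2 * Cc τ v + 2) * MvPolynomial.X v + 1)) :=
          Finset.prod_mul_distrib.symm
      _ = ∏ v : Fin n, (qvar n ^ ((v : ℕ) + Cc τ v + 2) * MvPolynomial.X v
            + qvar n ^ ((v : ℕ) - Cc τ v)) := by
          apply Finset.prod_congr rfl
          intro v _
          have hc := Cc_le τ v
          rw [mul_add, mul_one, ← mul_assoc, ← pow_add,
            show (v : ℕ) - Cc τ v + (2 * Cc τ v + 2) = (v : ℕ) + Cc τ v + 2 from by omega]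
  rw [Finset.sum_congr rfl (fun τ _ => step3 τ)]
  -- step 4 : bijection with codes
  have hcard : Fintype.card (Equiv.Perm (Fin n))
      = Fintype.card (∀ v : Fin n, Fin ((v : ℕ) + 1)) := by
    rw [Fintype.card_perm, Fintype.card_fin, Fintype.card_pi]
    simp only [Fintype.card_fin]
    rw [Fin.prod_univ_eq_prod_range (fun i => i + 1) n,
      Finset.prod_range_add_one_eq_factorial]
  have hbij : Function.Bijective
      (fun τ : Equiv.Perm (Fin n) => (fun v : Fin n => (⟨Cc τ v, by
        have := Cc_le τ v; omega⟩ : Fin ((v : ℕ) + 1)))) := by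
    rw [Fintype.bijective_iff_injective_and_card]
    refine ⟨?_, hcard⟩
    intro τ σ h
    apply Cc_injective
    intro v
    have := congrFun h v
    exact congrArg Fin.val this
  have step4 : (∑ τ : Equiv.Perm (Fin n),
      ∏ v : Fin n, (qvar n ^ ((v : ℕ) + Cc τ v + 2) * MvPolynomial.X v
          + qvar n ^ ((v : ℕ) - Cc τ v)))
      = ∑ c : (∀ v : Fin n, Fin ((v : ℕ) + 1)),
          ∏ v : Fin n, (qvar n ^ ((v : ℕ) + (c v : ℕ) + 2) * MvPolynomial.X v
            + qvar n ^ ((v : ℕ) - (c v : ℕ))) := by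
    exact Fintype.sum_bijective _ hbij _ _ (fun τ => rfl)
  rw [step4]
  have step5 : (∑ c : (∀ v : Fin n, Fin ((v : ℕ) + 1)),
      ∏ v : Fin n, (qvar n ^ ((v : ℕ) + (c v : ℕ) + 2) * MvPolynomial.X v
        + qvar n ^ ((v : ℕ) - (c v : ℕ))))
      = ∏ v : Fin n, ∑ c : Fin ((v : ℕ) + 1),
          (qvar n ^ ((v : ℕ) + (c : ℕ) + 2) * MvPolynomial.X v
            + qvar n ^ ((v : ℕ) - (c : ℕ))) := by
    rw [Finset.prod_univ_sum]
    rw [Fintype.piFinset_univ]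
  rw [step5]
  have step6 : ∀ v : Fin n,
      (∑ c : Fin ((v : ℕ) + 1), (qvar n ^ ((v : ℕ) + (c : ℕ) + 2) * MvPolynomial.X v
        + qvar n ^ ((v : ℕ) - (c : ℕ))))
      = (∑ j ∈ Finset.range ((v : ℕ) + 1), qvar n ^ j)
          * (1 + qvar n ^ ((v : ℕ) + 2) * MvPolynomial.X v) := by
    intro v
    rw [Fin.sum_univ_eq_sum_range
      (fun c => qvar n ^ ((v : ℕ) + c + 2) * MvPolynomial.X v + qvar n ^ ((v : ℕ) - c))]
    rw [Finset.sum_add_distrib]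
    have h1 : ∑ c ∈ Finset.range ((v : ℕ) + 1), qvar n ^ ((v : ℕ) - c)
        = ∑ j ∈ Finset.range ((v : ℕ) + 1), qvar n ^ j := by
      rw [← Finset.sum_range_reflect]
      apply Finset.sum_congr rfl
      intro j hj
      simp only [Finset.mem_range] at hj
      congr 1
      omega
    have h2 : ∑ c ∈ Finset.range ((v : ℕ) + 1), qvar n ^ ((v : ℕ) + c + 2) * MvPolynomial.X v
        = (∑ j ∈ Finset.range ((v : ℕ) + 1), qvar n ^ j)
            * (qvar n ^ ((v : ℕ) + 2) * MvPolynomial.X v) := by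
      rw [Finset.sum_mul]
      apply Finset.sum_congr rfl
      intro j _
      rw [show (v : ℕ) + j + 2 = j + ((v : ℕ) + 2) from by omega, pow_add]
      ring
    rw [h1, h2]
    ring
  rw [Finset.prod_congr rfl (fun v _ => step6 v), Finset.prod_mul_distrib]
  congr 1
  rw [qFactorial]
  exact Fin.prod_univ_eq_prod_range
    (fun k => ∑ j ∈ Finset.range (k + 1), qvar n ^ j) n
end

section
/- (The computational identity in the proof of Lemma 5.9): For every integer r ≥ 1, writing ζ(k) = 1/(1 − X^{k}Y²) for k ∈ ℤ, the identity X^{2r} · ∏_{1≤i<j≤2r} ζ(2r−i−j+1)/ζ(2r−i−j+2) · ∏_{i=1}^{2r} ζ(2r−2i+1)/ζ(2r−2i) = −Y² · (1 − X^{2r}Y^{−2})/(1 − X^{2r}Y²) · ∏_{i=1}^{r} (1 − X^{2i}Y²)/(1 − X^{1−2i}Y²) holds in ℚ(X,Y). -/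
/-!
The computational identity in the proof of Lemma 5.9 (the functional equation for the
almost-spherical Siegel–Weil section), as an identity in `ℚ(X,Y)`
(with `X = q⁻¹`, `Y = q⁻ˢ`, and `ζ(k) = 1/(1 − X^k Y²)` playing the role of `ζ_E(2s+k)`).
-/

open Finset

/-- The field `ℚ(X,Y)` of rational functions in two indeterminates. -/
abbrev RF2 : Type := FractionRing (MvPolynomial (Fin 2) ℚ)

/-- The indeterminate `X`. -/
noncomputable def Xv : RF2 :=
  algebraMap (MvPolynomial (Fin 2) ℚ) RF2 (MvPolynomial.X 0)

/-- The indeterminate `Y`. -/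
noncomputable def Yv : RF2 :=
  algebraMap (MvPolynomial (Fin 2) ℚ) RF2 (MvPolynomial.X 1)

/-- `ζ(k) = 1/(1 − X^k Y²)` for `k ∈ ℤ`. -/
noncomputable def zeta (k : ℤ) : RF2 := 1 / (1 - Xv ^ k * Yv ^ 2)

noncomputable def G (k : ℤ) : RF2 := 1 - Xv ^ k * Yv ^ 2

lemma hX : Xv ≠ 0 := by
  have hinj : Function.Injective (algebraMap (MvPolynomial (Fin 2) ℚ) RF2) :=
    IsFractionRing.injective _ _
  rw [Xv, Ne, map_eq_zero_iff _ hinj]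
  exact MvPolynomial.X_ne_zero _

lemma hY : Yv ≠ 0 := by
  have hinj : Function.Injective (algebraMap (MvPolynomial (Fin 2) ℚ) RF2) :=
    IsFractionRing.injective _ _
  rw [Yv, Ne, map_eq_zero_iff _ hinj]
  exact MvPolynomial.X_ne_zero _

lemma key (k : ℤ) : Xv ^ k * Yv ^ 2 ≠ 1 := by
  have hinj : Function.Injective (algebraMap (MvPolynomial (Fin 2) ℚ) RF2) :=
    IsFractionRing.injective _ _
  obtain ⟨n, rfl | rfl⟩ := k.eq_nat_or_neg
  · intro h
    rw [zpow_natCast] at h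
    have h2 : (algebraMap (MvPolynomial (Fin 2) ℚ) RF2)
        (MvPolynomial.X 0 ^ n * MvPolynomial.X 1 ^ 2) =
        (algebraMap (MvPolynomial (Fin 2) ℚ) RF2) 1 := by
      rw [map_mul, map_pow, map_pow, map_one]
      unfold Xv Yv at h
      exact h
    have h3 := hinj h2
    have h4 := congrArg (MvPolynomial.eval (fun i : Fin 2 => if i = 0 then (1 : ℚ) else 2)) h3
    simp at h4
    norm_num at h4
  · intro h
    rw [zpow_neg, zpow_natCast] at h
    have hx : Xv ^ n ≠ 0 := pow_ne_zero _ hX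
    rw [inv_mul_eq_one₀ hx] at h
    have h2 : (algebraMap (MvPolynomial (Fin 2) ℚ) RF2) (MvPolynomial.X 0 ^ n) =
        (algebraMap (MvPolynomial (Fin 2) ℚ) RF2) (MvPolynomial.X 1 ^ 2) := by
      rw [map_pow, map_pow]
      unfold Xv Yv at h
      exact h
    have h3 := hinj h2
    have h4 := congrArg (MvPolynomial.eval (fun i : Fin 2 => if i = 0 then (1 : ℚ) else 2)) h3
    simp at h4
    norm_num at h4

lemma hG (k : ℤ) : G k ≠ 0 := by
  rw [G, sub_ne_zero]
  exact (key k).symm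

lemma zq (a b : ℤ) : zeta a / zeta b = G b / G a := by
  rw [zeta, zeta, one_div, one_div, inv_div_inv, G, G]

lemma teleIoo (h : ℕ → RF2) (hnz : ∀ j, h j ≠ 0) (i : ℕ) :
    ∀ n, i < n → (∏ j ∈ Finset.Ioo i n, h j / h (j + 1)) = h (i + 1) / h n := by
  intro n
  induction n with
  | zero => omega
  | succ m ih =>
    intro him
    rcases Nat.lt_succ_iff_lt_or_eq.mp him with hlt | rfl
    · have hins : Finset.Ioo i (m + 1) = insert m (Finset.Ioo i m) := by
        ext x; simp only [Finset.mem_Ioo, Finset.mem_insert]; omega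
      rw [hins, Finset.prod_insert (by simp), ih hlt]
      rw [div_mul_div_comm, mul_comm (h (m + 1)) (h m), mul_div_mul_left _ _ (hnz m)]
    · have he : Finset.Ioo i (i + 1) = ∅ := by
        ext x; simp only [Finset.mem_Ioo, Finset.notMem_empty, iff_false]; omega
      rw [he, Finset.prod_empty, div_self (hnz _)]

lemma teleR (h : ℕ → RF2) (hnz : ∀ j, h j ≠ 0) (n : ℕ) :
    (∏ i ∈ Finset.range n, h (i + 1) / h i) = h n / h 0 := by
  induction n with
  | zero => simp [div_self (hnz 0)]
  | succ m ih =>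
    rw [Finset.prod_range_succ, ih]
    rw [div_mul_div_comm, mul_comm (h 0) (h m), mul_div_mul_left _ _ (hnz m)]

lemma splitEO (f : ℕ → RF2) (n : ℕ) :
    ∏ i ∈ Finset.range (2 * n), f i =
      (∏ i ∈ Finset.range n, f (2 * i)) * ∏ i ∈ Finset.range n, f (2 * i + 1) := by
  induction n with
  | zero => simp
  | succ m ih =>
    have h2 : 2 * (m + 1) = 2 * m + 1 + 1 := by ring
    rw [h2, Finset.prod_range_succ, Finset.prod_range_succ, ih,
      Finset.prod_range_succ, Finset.prod_range_succ]
    ring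

lemma reflG (g : ℤ → RF2) (n : ℕ) :
    ∏ i ∈ Finset.range n, g (2 * (n : ℤ) - 2 - 2 * (i : ℤ)) =
      ∏ i ∈ Finset.range n, g (2 * (i : ℤ)) := by
  calc ∏ i ∈ Finset.range n, g (2 * (n : ℤ) - 2 - 2 * (i : ℤ))
      = ∏ i ∈ Finset.range n, (fun j : ℕ => g (2 * (j : ℤ))) (n - 1 - i) := by
        apply Finset.prod_congr rfl
        intro i hi
        have hi' := Finset.mem_range.mp hi
        simp only
        congr 1
        omega
    _ = _ := Finset.prod_range_reflect (fun j : ℕ => g (2 * (j : ℤ))) n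

lemma final_alg {K : Type*} [Field K] (t u C D g0 g2 A : K)
    (ht : t ≠ 0) (hu : u ≠ 0) (hC : C ≠ 0) (hD : D ≠ 0) (hg0 : g0 ≠ 0) (hg2 : g2 ≠ 0) :
    t * (A * ((t - u) / t * C / g0) / (C * D)) =
      -u * ((u - t) / u / g2) * (g2 * A / g0 / D) := by
  field_simp
  ring


set_option maxHeartbeats 1000000 in
/-- **Computational identity of Lemma 5.9**: for every `r ≥ 1`,
`X^{2r} ∏_{1≤i<j≤2r} ζ(2r−i−j+1)/ζ(2r−i−j+2) ∏_{i=1}^{2r} ζ(2r−2i+1)/ζ(2r−2i)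
 = −Y² (1 − X^{2r}Y⁻²)/(1 − X^{2r}Y²) ∏_{i=1}^{r} (1 − X^{2i}Y²)/(1 − X^{1−2i}Y²)`
in `ℚ(X,Y)`.  (Below, indices are shifted to be 0-based: `i,j ↦ i+1,j+1`.) -/
theorem lemma59_identity (r : ℕ) (hr : 1 ≤ r) :
    Xv ^ (2 * r) *
      (∏ i ∈ Finset.range (2 * r), ∏ j ∈ Finset.Ioo i (2 * r),
        zeta (2 * (r : ℤ) - 1 - (i : ℤ) - (j : ℤ)) /
          zeta (2 * (r : ℤ) - (i : ℤ) - (j : ℤ))) *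
      (∏ i ∈ Finset.range (2 * r),
        zeta (2 * (r : ℤ) - 1 - 2 * (i : ℤ)) / zeta (2 * (r : ℤ) - 2 - 2 * (i : ℤ)))
    = -Yv ^ 2 * ((1 - Xv ^ (2 * r) * Yv ^ (-2 : ℤ)) / (1 - Xv ^ (2 * r) * Yv ^ 2)) *
        ∏ i ∈ Finset.range r,
          (1 - Xv ^ (2 * i + 2) * Yv ^ 2) / (1 - Xv ^ (1 - 2 * ((i : ℤ) + 1)) * Yv ^ 2) := by
  simp only [zq]
  -- telescope the inner product
  have e1 : ∀ i ∈ Finset.range (2 * r),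
      (∏ j ∈ Finset.Ioo i (2 * r),
        G (2 * (r : ℤ) - (i : ℤ) - (j : ℤ)) / G (2 * (r : ℤ) - 1 - (i : ℤ) - (j : ℤ)))
      = G (2 * (r : ℤ) - 1 - 2 * (i : ℤ)) / G (-(i : ℤ)) := by
    intro i hi
    have hi' := Finset.mem_range.mp hi
    have step : ∀ j ∈ Finset.Ioo i (2 * r),
        G (2 * (r : ℤ) - (i : ℤ) - (j : ℤ)) / G (2 * (r : ℤ) - 1 - (i : ℤ) - (j : ℤ))
        = (fun j : ℕ => G (2 * (r : ℤ) - (i : ℤ) - (j : ℤ))) j /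
          (fun j : ℕ => G (2 * (r : ℤ) - (i : ℤ) - (j : ℤ))) (j + 1) := by
      intro j hj
      simp only
      have harg : 2 * (r : ℤ) - 1 - (i : ℤ) - (j : ℤ) = 2 * (r : ℤ) - (i : ℤ) - ((j : ℕ) + 1 : ℕ) := by
        push_cast; ring
      rw [harg]
    rw [Finset.prod_congr rfl step, teleIoo _ (fun j => hG _) i (2 * r) hi']
    have h1 : (2 * (r : ℤ) - (i : ℤ) - ((i : ℕ) + 1 : ℕ)) = 2 * (r : ℤ) - 1 - 2 * (i : ℤ) := by
      push_cast; ring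
    have h2 : (2 * (r : ℤ) - (i : ℤ) - ((2 * r : ℕ) : ℕ)) = -(i : ℤ) := by
      push_cast; ring
    rw [h1, h2]
  rw [Finset.prod_congr rfl e1, mul_assoc, ← Finset.prod_mul_distrib]
  have e2 : ∀ i ∈ Finset.range (2 * r),
      (G (2 * (r : ℤ) - 1 - 2 * (i : ℤ)) / G (-(i : ℤ))) *
        (G (2 * (r : ℤ) - 2 - 2 * (i : ℤ)) / G (2 * (r : ℤ) - 1 - 2 * (i : ℤ)))
      = G (2 * (r : ℤ) - 2 - 2 * (i : ℤ)) / G (-(i : ℤ)) := by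
    intro i _
    rw [mul_comm, div_mul_div_comm,
      mul_comm (G (2 * (r : ℤ) - 2 - 2 * (i : ℤ))) (G (2 * (r : ℤ) - 1 - 2 * (i : ℤ))),
      mul_div_mul_left _ _ (hG _)]
  rw [Finset.prod_congr rfl e2, Finset.prod_div_distrib]
  -- split numerator as two half-range products
  have e3 : ∏ i ∈ Finset.range (2 * r), G (2 * (r : ℤ) - 2 - 2 * (i : ℤ))
      = (∏ i ∈ Finset.range r, G (2 * (i : ℤ))) * ∏ i ∈ Finset.range r, G (-2 - 2 * (i : ℤ)) := by
    rw [two_mul, Finset.prod_range_add]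
    congr 1
    · exact reflG G r
    · apply Finset.prod_congr rfl
      intro i _
      have harg : 2 * (r : ℤ) - 2 - 2 * ((r + i : ℕ) : ℤ) = -2 - 2 * (i : ℤ) := by
        push_cast; ring
      rw [harg]
  -- split denominator into even and odd parts
  have e4 : ∏ i ∈ Finset.range (2 * r), G (-(i : ℤ))
      = (∏ i ∈ Finset.range r, G (-2 * (i : ℤ))) * ∏ i ∈ Finset.range r, G (-2 * (i : ℤ) - 1) := by
    have ev : ∀ i ∈ Finset.range r, G (-((2 * i : ℕ) : ℤ)) = G (-2 * (i : ℤ)) := by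
      intro i _
      have harg : (-((2 * i : ℕ) : ℤ)) = -2 * (i : ℤ) := by push_cast; ring
      rw [harg]
    have od : ∀ i ∈ Finset.range r, G (-((2 * i + 1 : ℕ) : ℤ)) = G (-2 * (i : ℤ) - 1) := by
      intro i _
      have harg : (-((2 * i + 1 : ℕ) : ℤ)) = -2 * (i : ℤ) - 1 := by push_cast; ring
      rw [harg]
    rw [splitEO (fun i : ℕ => G (-(i : ℤ))) r, Finset.prod_congr rfl ev, Finset.prod_congr rfl od]
  -- massage the RHS product
  have e5 : ∏ i ∈ Finset.range r,
      (1 - Xv ^ (2 * i + 2) * Yv ^ 2) / (1 - Xv ^ (1 - 2 * ((i : ℤ) + 1)) * Yv ^ 2)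
      = (∏ i ∈ Finset.range r, G (2 * (i : ℤ) + 2)) / ∏ i ∈ Finset.range r, G (-2 * (i : ℤ) - 1) := by
    rw [← Finset.prod_div_distrib]
    apply Finset.prod_congr rfl
    intro i _
    congr 1
    · rw [G]
      have harg : 1 - 2 * ((i : ℤ) + 1) = -2 * (i : ℤ) - 1 := by ring
      rw [harg]
  rw [e3, e4, e5]
  -- telescope facts (cross-multiplied)
  have hl : ∏ i ∈ Finset.range r, G (-2 * ((i : ℕ) + 1 : ℕ) : ℤ) / G (-2 * (i : ℤ))
      = (∏ i ∈ Finset.range r, G (-2 - 2 * (i : ℤ))) / ∏ i ∈ Finset.range r, G (-2 * (i : ℤ)) := by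
    rw [← Finset.prod_div_distrib]
    apply Finset.prod_congr rfl
    intro i _
    have harg : (-2 * ((i : ℕ) + 1 : ℕ) : ℤ) = -2 - 2 * (i : ℤ) := by push_cast; ring
    rw [harg]
  have hCne : (∏ i ∈ Finset.range r, G (-2 * (i : ℤ))) ≠ 0 :=
    Finset.prod_ne_zero_iff.mpr (fun i _ => hG _)
  have hAne : (∏ i ∈ Finset.range r, G (2 * (i : ℤ))) ≠ 0 :=
    Finset.prod_ne_zero_iff.mpr (fun i _ => hG _)
  have hDne : (∏ i ∈ Finset.range r, G (-2 * (i : ℤ) - 1)) ≠ 0 :=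
    Finset.prod_ne_zero_iff.mpr (fun i _ => hG _)
  have hB : ∏ i ∈ Finset.range r, G (-2 - 2 * (i : ℤ))
      = G (-2 * (r : ℤ)) * (∏ i ∈ Finset.range r, G (-2 * (i : ℤ))) / G 0 := by
    have htr := teleR (fun i : ℕ => G (-2 * (i : ℤ))) (fun j => hG _) r
    rw [hl] at htr
    have h0 : G (-2 * ((0 : ℕ) : ℤ)) = G 0 := by norm_num
    rw [h0] at htr
    rw [div_eq_div_iff hCne (hG 0)] at htr
    rw [eq_div_iff (hG 0)]
    exact htr
  have hl2 : ∏ i ∈ Finset.range r, G (2 * ((i : ℕ) + 1 : ℕ) : ℤ) / G (2 * (i : ℤ))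
      = (∏ i ∈ Finset.range r, G (2 * (i : ℤ) + 2)) / ∏ i ∈ Finset.range r, G (2 * (i : ℤ)) := by
    rw [← Finset.prod_div_distrib]
    apply Finset.prod_congr rfl
    intro i _
    have harg : (2 * ((i : ℕ) + 1 : ℕ) : ℤ) = 2 * (i : ℤ) + 2 := by push_cast; ring
    rw [harg]
  have hE : ∏ i ∈ Finset.range r, G (2 * (i : ℤ) + 2)
      = G (2 * (r : ℤ)) * (∏ i ∈ Finset.range r, G (2 * (i : ℤ))) / G 0 := by
    have htr := teleR (fun i : ℕ => G (2 * (i : ℤ))) (fun j => hG _) r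
    rw [hl2] at htr
    have h0 : G (2 * ((0 : ℕ) : ℤ)) = G 0 := by norm_num
    rw [h0] at htr
    rw [div_eq_div_iff hAne (hG 0)] at htr
    rw [eq_div_iff (hG 0)]
    exact htr
  rw [hB, hE]
  -- unfold the remaining G values
  have hXr : Xv ^ (2 * r) ≠ 0 := pow_ne_zero _ hX
  have hY2 : Yv ^ 2 ≠ 0 := pow_ne_zero _ hY
  have hm : G (-2 * (r : ℤ)) = (Xv ^ (2 * r) - Yv ^ 2) / Xv ^ (2 * r) := by
    rw [G, show (-2 * (r : ℤ)) = -((2 * r : ℕ) : ℤ) by push_cast; ring, zpow_neg, zpow_natCast]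
    field_simp
  have hp : (1 - Xv ^ (2 * r) * Yv ^ 2) = G (2 * (r : ℤ)) := by
    rw [G, show (2 * (r : ℤ)) = ((2 * r : ℕ) : ℤ) by push_cast; ring, zpow_natCast]
  have hy2 : Yv ^ (-2 : ℤ) = (Yv ^ 2)⁻¹ := by
    rw [show (-2 : ℤ) = -((2 : ℕ) : ℤ) by norm_num, zpow_neg, zpow_natCast]
  have hq2 : 1 - Xv ^ (2 * r) * Yv ^ (-2 : ℤ) = (Yv ^ 2 - Xv ^ (2 * r)) / Yv ^ 2 := by
    rw [hy2]
    field_simp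
    rw [sub_div, div_self hY2]
  rw [hm, hp, hq2]
  exact final_alg _ _ _ _ _ _ _ hXr hY2 hCne hDne (hG 0) (hG (2 * (r : ℤ)))
end
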